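/- arXiv:math/0206189 — 2 statements merged into one kernel-verified Lean document; each statement's English description precedes it below -/
import Mathlib

section
/- Let G be a closed subgroup of GL(d,ℝ) whose natural action on the projective space ℝP^{d−1} is transitive, i.e. for all nonzero v, w ∈ ℝ^d there is g ∈ G with g(ℝv) = ℝw. Then for every ε₁ > 0 there exists α > 0 such that whenever v₁, v₂ ∈ ℝ^d are nonzero with ∠(v₁, v₂) < α, there exists R ∈ G with ‖R − I‖ < ε₁ and R(ℝv₁) = ℝv₂. -/
open Matrix InnerProductGeometry
open scoped LinearAlgebra.Projectivization Pointwise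

/-- The operator norm of a `d × d` real matrix, acting on Euclidean space. -/
noncomputable def matOpNorm {d : ℕ} (R : Matrix (Fin d) (Fin d) ℝ) : ℝ :=
  ‖LinearMap.toContinuousLinearMap (Matrix.toEuclideanLin R)‖

namespace Stmt12Aux

abbrev Euc (d : ℕ) := EuclideanSpace ℝ (Fin d)

variable {d : ℕ}

/-- The linear map from matrices to continuous linear maps on Euclidean space. -/
noncomputable def Phi (d : ℕ) :
    Matrix (Fin d) (Fin d) ℝ →ₗ[ℝ] (Euc d →L[ℝ] Euc d) :=
  (LinearMap.toContinuousLinearMap.toLinearMap).comp (Matrix.toEuclideanLin.toLinearMap)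

lemma Phi_apply (M : Matrix (Fin d) (Fin d) ℝ) (v : Euc d) :
    Phi d M v = Matrix.toEuclideanLin M v := rfl

lemma matOpNorm_eq (M : Matrix (Fin d) (Fin d) ℝ) : matOpNorm M = ‖Phi d M‖ := rfl

lemma toEuclideanLin_mul_apply (A B : Matrix (Fin d) (Fin d) ℝ) (v : Euc d) :
    Matrix.toEuclideanLin (A * B) v = Matrix.toEuclideanLin A (Matrix.toEuclideanLin B v) := by
  simp [Matrix.toEuclideanLin_apply, Matrix.mulVec_mulVec]

lemma toEuclideanLin_one_apply (v : Euc d) :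
    Matrix.toEuclideanLin (1 : Matrix (Fin d) (Fin d) ℝ) v = v := by
  simp [Matrix.toEuclideanLin_apply]

lemma Phi_mul (A B : Matrix (Fin d) (Fin d) ℝ) : Phi d (A * B) = (Phi d A).comp (Phi d B) := by
  ext v
  simp [Phi_apply, toEuclideanLin_mul_apply]

lemma matOpNorm_nonneg (M : Matrix (Fin d) (Fin d) ℝ) : 0 ≤ matOpNorm M :=
  norm_nonneg _

lemma matOpNorm_mul_le (A B : Matrix (Fin d) (Fin d) ℝ) :
    matOpNorm (A * B) ≤ matOpNorm A * matOpNorm B := by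
  rw [matOpNorm_eq, matOpNorm_eq, matOpNorm_eq, Phi_mul]
  exact ContinuousLinearMap.opNorm_comp_le _ _

lemma matOpNorm_one_le : matOpNorm (1 : Matrix (Fin d) (Fin d) ℝ) ≤ 1 := by
  rw [matOpNorm_eq]
  have : Phi d 1 = ContinuousLinearMap.id ℝ (Euc d) := by
    ext v; simp [Phi_apply, toEuclideanLin_one_apply]
  rw [this]
  exact ContinuousLinearMap.norm_id_le

lemma matOpNorm_sub_le (A B C : Matrix (Fin d) (Fin d) ℝ) :
    matOpNorm (A - B) ≤ matOpNorm (A - C) + matOpNorm (C - B) := by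
  rw [matOpNorm_eq, matOpNorm_eq, matOpNorm_eq, ← sub_add_sub_cancel A C B, map_add]
  exact norm_add_le _ _

lemma matOpNorm_neg (A : Matrix (Fin d) (Fin d) ℝ) : matOpNorm (-A) = matOpNorm A := by
  rw [matOpNorm_eq, matOpNorm_eq, map_neg, norm_neg]

lemma continuous_phi : Continuous (Phi d) :=
  (Phi d).continuous_of_finiteDimensional

/-! ### The topology on projective space -/

noncomputable instance : TopologicalSpace (ℙ ℝ (Euc d)) :=
  inferInstanceAs (TopologicalSpace (Quotient (projectivizationSetoid ℝ (Euc d))))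

/-- The quotient map from nonzero vectors to projective space. -/
noncomputable def q (d : ℕ) : {v : Euc d // v ≠ 0} → ℙ ℝ (Euc d) := Projectivization.mk' ℝ

lemma q_eq_mk (v : {v : Euc d // v ≠ 0}) : q d v = Projectivization.mk ℝ ↑v v.2 :=
  Projectivization.mk'_eq_mk ℝ v

lemma q_eq_q_iff (v w : {v : Euc d // v ≠ 0}) :
    q d v = q d w ↔ ∃ a : ℝˣ, a • (w : Euc d) = (v : Euc d) := by
  rw [q_eq_mk, q_eq_mk, Projectivization.mk_eq_mk_iff]

lemma isQuotientMap_q : Topology.IsQuotientMap (q d) :=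
  isQuotientMap_quotient_mk'

lemma continuous_q : Continuous (q d) := isQuotientMap_q.continuous

/-- Scalar multiplication by a unit on nonzero vectors. -/
noncomputable def sig (a : ℝˣ) (w : {v : Euc d // v ≠ 0}) : {v : Euc d // v ≠ 0} :=
  ⟨(a : ℝ) • (w : Euc d), smul_ne_zero a.ne_zero w.2⟩

lemma continuous_sig (a : ℝˣ) : Continuous (sig (d := d) a) :=
  Continuous.subtype_mk (f := fun w : {v : Euc d // v ≠ 0} => (a : ℝ) • (w : Euc d))
    (continuous_subtype_val.const_smul (a : ℝ)) _

lemma isOpenMap_q : IsOpenMap (q d) := by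
  intro s hs
  rw [← isQuotientMap_q.isOpen_preimage]
  have : q d ⁻¹' (q d '' s) = ⋃ a : ℝˣ, sig a ⁻¹' s := by
    ext w
    simp only [Set.mem_preimage, Set.mem_image, Set.mem_iUnion]
    constructor
    · rintro ⟨v, hv, hqv⟩
      obtain ⟨a, ha⟩ := (q_eq_q_iff v w).1 hqv
      refine ⟨a, ?_⟩
      have : sig a w = v := Subtype.ext (by simpa [sig, Units.smul_def] using ha)
      rwa [this]
    · rintro ⟨a, ha⟩
      refine ⟨sig a w, ha, ?_⟩
      rw [q_eq_q_iff]
      exact ⟨a, by simp [sig, Units.smul_def]⟩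
  rw [this]
  exact isOpen_iUnion fun a => (continuous_sig a).isOpen_preimage s hs

lemma isOpenQuotientMap_q : IsOpenQuotientMap (q d) :=
  ⟨Quotient.mk''_surjective, continuous_q, isOpenMap_q⟩

/-- The closed set describing the projectivization relation. -/
lemma q_rel_closed :
    IsClosed {p : {v : Euc d // v ≠ 0} × {v : Euc d // v ≠ 0} |
      (inner ℝ ((p.1 : Euc d)) ((p.2 : Euc d)) : ℝ) • (p.1 : Euc d)
        = (‖(p.1 : Euc d)‖ ^ 2) • (p.2 : Euc d)} := by
  apply isClosed_eq
  · exact (Continuous.inner (𝕜 := ℝ) (continuous_subtype_val.comp continuous_fst)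
      (continuous_subtype_val.comp continuous_snd)).smul
      (continuous_subtype_val.comp continuous_fst)
  · exact ((continuous_norm.comp (continuous_subtype_val.comp continuous_fst)).pow 2).smul
      (continuous_subtype_val.comp continuous_snd)

lemma q_eq_iff_rel (v w : {v : Euc d // v ≠ 0}) :
    q d v = q d w ↔
      (inner ℝ ((v : Euc d)) ((w : Euc d)) : ℝ) • (v : Euc d)
        = (‖(v : Euc d)‖ ^ 2) • (w : Euc d) := by
  rw [q_eq_q_iff]
  constructor
  · rintro ⟨a, ha⟩
    have hv : (v : Euc d) = (a : ℝ) • (w : Euc d) := by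
      rw [← ha]; simp [Units.smul_def]
    rw [hv, real_inner_smul_left, real_inner_self_eq_norm_sq, smul_smul, norm_smul,
      mul_pow, Real.norm_eq_abs, sq_abs]
    congr 1
    ring
  · intro h
    have hvz : (v : Euc d) ≠ 0 := v.2
    have hwz : (w : Euc d) ≠ 0 := w.2
    have hn : (‖(v : Euc d)‖ ^ 2 : ℝ) ≠ 0 := pow_ne_zero 2 (norm_ne_zero_iff.2 hvz)
    have hw : (w : Euc d) = ((‖(v : Euc d)‖ ^ 2)⁻¹ * inner ℝ (v : Euc d) (w : Euc d)) • (v : Euc d) := by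
      rw [mul_smul, h, inv_smul_smul₀ hn]
    have hcne : ((‖(v : Euc d)‖ ^ 2)⁻¹ * inner ℝ (v : Euc d) (w : Euc d) : ℝ) ≠ 0 := by
      intro h0
      apply hwz
      rw [hw, h0, zero_smul]
    refine ⟨Units.mk0 _ (inv_ne_zero hcne), ?_⟩
    rw [Units.smul_def, Units.val_mk0]
    exact (inv_smul_eq_iff₀ hcne).2 hw

instance : T2Space (ℙ ℝ (Euc d)) := by
  constructor
  intro x y hxy
  obtain ⟨v, rfl⟩ := isOpenQuotientMap_q.surjective x
  obtain ⟨w, rfl⟩ := isOpenQuotientMap_q.surjective y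
  have hvw : (v, w) ∉ {p : {v : Euc d // v ≠ 0} × {v : Euc d // v ≠ 0} |
      (inner ℝ ((p.1 : Euc d)) ((p.2 : Euc d)) : ℝ) • (p.1 : Euc d)
        = (‖(p.1 : Euc d)‖ ^ 2) • (p.2 : Euc d)} := by
    intro h
    exact hxy ((q_eq_iff_rel v w).2 h)
  have hopen := (q_rel_closed (d := d)).isOpen_compl
  obtain ⟨s, t, hs, ht, hvs, hwt, hst⟩ := isOpen_prod_iff.1 hopen v w hvw
  refine ⟨q d '' s, q d '' t, isOpenMap_q s hs, isOpenMap_q t ht,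
    ⟨v, hvs, rfl⟩, ⟨w, hwt, rfl⟩, ?_⟩
  rw [Set.disjoint_left]
  rintro z ⟨v', hv', rfl⟩ ⟨w', hw', hzw⟩
  have : (v', w') ∈ s ×ˢ t := ⟨hv', hw'⟩
  exact hst this ((q_eq_iff_rel v' w').1 hzw.symm)

/-- The map from the unit sphere onto projective space. -/
noncomputable def fS (d : ℕ) : Metric.sphere (0 : Euc d) 1 → ℙ ℝ (Euc d) := fun u =>
  q d ⟨(u : Euc d), by
    have : ‖(u : Euc d)‖ = 1 := mem_sphere_zero_iff_norm.1 u.2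
    intro h0; rw [h0] at this; simp at this⟩

lemma continuous_fS : Continuous (fS d) :=
  continuous_q.comp (continuous_subtype_val.subtype_mk _)

lemma surjective_fS : Function.Surjective (fS d) := by
  intro x
  obtain ⟨v, rfl⟩ := isOpenQuotientMap_q.surjective x
  have hvz : (v : Euc d) ≠ 0 := v.2
  have hnorm : ‖‖(v : Euc d)‖⁻¹ • (v : Euc d)‖ = 1 := by
    rw [norm_smul, Real.norm_eq_abs, abs_inv, abs_norm,
      inv_mul_cancel₀ (norm_ne_zero_iff.2 hvz)]
  refine ⟨⟨‖(v : Euc d)‖⁻¹ • (v : Euc d), mem_sphere_zero_iff_norm.2 hnorm⟩, ?_⟩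
  rw [fS, q_eq_q_iff]
  refine ⟨Units.mk0 ‖(v : Euc d)‖⁻¹ (inv_ne_zero (norm_ne_zero_iff.2 hvz)), ?_⟩
  simp [Units.smul_def]

instance : CompactSpace (ℙ ℝ (Euc d)) := by
  constructor
  have : (Set.univ : Set (ℙ ℝ (Euc d))) = Set.range (fS d) :=
    (Set.range_eq_univ.2 surjective_fS).symm
  rw [this]
  exact isCompact_range continuous_fS

end Stmt12Aux

namespace Part2

open Stmt12Aux Projectivization

variable {d : ℕ}

lemma toEucLin_gl_injective (g : GL (Fin d) ℝ) :
    Function.Injective (Matrix.toEuclideanLin (g : Matrix (Fin d) (Fin d) ℝ)) := by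
  intro x y hxy
  have h1 : ∀ v : Euc d, Matrix.toEuclideanLin ((↑g⁻¹ : Matrix (Fin d) (Fin d) ℝ))
      (Matrix.toEuclideanLin (↑g : Matrix (Fin d) (Fin d) ℝ) v) = v := by
    intro v
    rw [← toEuclideanLin_mul_apply, Units.inv_mul]
    exact toEuclideanLin_one_apply v
  rw [← h1 x, ← h1 y, hxy]

lemma toEucLin_gl_ne_zero (g : GL (Fin d) ℝ) {v : Euc d} (hv : v ≠ 0) :
    Matrix.toEuclideanLin (g : Matrix (Fin d) (Fin d) ℝ) v ≠ 0 := by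
  intro h
  apply hv
  apply toEucLin_gl_injective g
  rw [h, map_zero]

noncomputable instance : SMul (GL (Fin d) ℝ) (ℙ ℝ (Euc d)) :=
  ⟨fun g x => x.map (Matrix.toEuclideanLin (g : Matrix (Fin d) (Fin d) ℝ))
    (toEucLin_gl_injective g)⟩

lemma gl_smul_mk (g : GL (Fin d) ℝ) (v : Euc d) (hv : v ≠ 0) :
    g • Projectivization.mk ℝ v hv
      = Projectivization.mk ℝ (Matrix.toEuclideanLin (g : Matrix (Fin d) (Fin d) ℝ) v)
        (toEucLin_gl_ne_zero g hv) := by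
  show Projectivization.map _ _ _ = _
  rw [Projectivization.map_mk]

lemma mk_congr {v w : Euc d} (hv : v ≠ 0) (hw : w ≠ 0) (h : v = w) :
    Projectivization.mk ℝ v hv = Projectivization.mk ℝ w hw := by
  subst h; rfl

noncomputable instance : MulAction (GL (Fin d) ℝ) (ℙ ℝ (Euc d)) where
  one_smul := by
    intro x
    refine Projectivization.ind (fun v hv => ?_) x
    rw [gl_smul_mk]
    exact mk_congr _ _ (by rw [Units.val_one]; exact toEuclideanLin_one_apply v)
  mul_smul := by
    intro g h x
    refine Projectivization.ind (fun v hv => ?_) x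
    rw [gl_smul_mk, gl_smul_mk, gl_smul_mk]
    exact mk_congr _ _ (by rw [Units.val_mul]; exact toEuclideanLin_mul_apply _ _ v)

lemma map_span_eq_iff (M : Matrix (Fin d) (Fin d) ℝ) {v w : Euc d} (hw : w ≠ 0) :
    (Submodule.span ℝ {v}).map (Matrix.toEuclideanLin M) = Submodule.span ℝ {w}
      ↔ ∃ a : ℝˣ, a • w = Matrix.toEuclideanLin M v := by
  rw [Submodule.map_span, Set.image_singleton, Submodule.span_singleton_eq_span_singleton]
  constructor
  · rintro ⟨z, hz⟩
    exact ⟨z⁻¹, by rw [← hz, inv_smul_smul]⟩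
  · rintro ⟨a, ha⟩
    exact ⟨a⁻¹, by rw [← ha, inv_smul_smul]⟩

end Part2

section Main

open Stmt12Aux Part2 Projectivization

variable {d : ℕ}

/-- The embedding of `GL` into pairs of matrices. -/
def psi (d : ℕ) : GL (Fin d) ℝ → Matrix (Fin d) (Fin d) ℝ × Matrix (Fin d) (Fin d) ℝ :=
  fun u => (↑u, ↑u⁻¹)

lemma psi_isEmbedding : Topology.IsEmbedding (psi d) := by
  have h1 : psi d = ((Homeomorph.refl _).prodCongr MulOpposite.opHomeomorph.symm)
      ∘ (Units.embedProduct _) := by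
    funext u
    rfl
  rw [h1]
  exact (Homeomorph.isEmbedding _).comp Units.isEmbedding_embedProduct

lemma psi_range_closed : IsClosed (Set.range (psi d)) := by
  have : Set.range (psi d)
      = {p : Matrix (Fin d) (Fin d) ℝ × Matrix (Fin d) (Fin d) ℝ |
          p.1 * p.2 = 1 ∧ p.2 * p.1 = 1} := by
    ext p
    constructor
    · rintro ⟨u, rfl⟩
      exact ⟨u.mul_inv, u.inv_mul⟩
    · rintro ⟨h1, h2⟩
      exact ⟨⟨p.1, p.2, h1, h2⟩, Prod.ext rfl rfl⟩
  rw [this]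
  exact (isClosed_eq (continuous_fst.mul continuous_snd) continuous_const).inter
    (isClosed_eq (continuous_snd.mul continuous_fst) continuous_const)

lemma psi_isClosedEmbedding : Topology.IsClosedEmbedding (psi d) :=
  ⟨psi_isEmbedding, psi_range_closed⟩

instance : LocallyCompactSpace (Matrix (Fin d) (Fin d) ℝ) :=
  inferInstanceAs (LocallyCompactSpace (Fin d → Fin d → ℝ))

instance : SecondCountableTopology (Matrix (Fin d) (Fin d) ℝ) :=
  inferInstanceAs (SecondCountableTopology (Fin d → Fin d → ℝ))

instance : LocallyCompactSpace (GL (Fin d) ℝ) :=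
  psi_isClosedEmbedding.locallyCompactSpace

instance : SecondCountableTopology (GL (Fin d) ℝ) :=
  psi_isEmbedding.secondCountableTopology

end Main

open Stmt12Aux Part2 MulAction

set_option maxHeartbeats 1000000 in
theorem stmt12 {d : ℕ}
    (G : Subgroup (GL (Fin d) ℝ)) (hGclosed : IsClosed (G : Set (GL (Fin d) ℝ)))
    (htrans : ∀ v w : EuclideanSpace ℝ (Fin d), v ≠ 0 → w ≠ 0 → ∃ g ∈ G,
      (Submodule.span ℝ {v}).map (Matrix.toEuclideanLin (g : Matrix (Fin d) (Fin d) ℝ)) =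
        Submodule.span ℝ {w})
    (ε₁ : ℝ) (hε₁ : 0 < ε₁) :
    ∃ α > 0, ∀ v₁ v₂ : EuclideanSpace ℝ (Fin d), v₁ ≠ 0 → v₂ ≠ 0 →
      angle v₁ v₂ < α →
      ∃ R ∈ G, matOpNorm ((R : Matrix (Fin d) (Fin d) ℝ) - 1) < ε₁ ∧
        (Submodule.span ℝ {v₁}).map (Matrix.toEuclideanLin (R : Matrix (Fin d) (Fin d) ℝ)) =
          Submodule.span ℝ {v₂} := by
  classical
  -- Instances on the subgroup
  haveI : LocallyCompactSpace ↥G := hGclosed.locallyCompactSpace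
  haveI : SecondCountableTopology ↥G := Topology.IsEmbedding.subtypeVal.secondCountableTopology
  haveI : SigmaCompactSpace ↥G := sigmaCompactSpace_of_locallyCompact_secondCountable
  -- Pretransitivity of the action of `G` on projective space
  haveI : IsPretransitive ↥G (ℙ ℝ (Euc d)) := by
    constructor
    intro x y
    refine Projectivization.ind (fun v hv => Projectivization.ind (fun w hw => ?_) y) x
    obtain ⟨g0, hg0G, hspan⟩ := htrans v w hv hw
    obtain ⟨a, ha⟩ := (map_span_eq_iff _ hw).1 hspan
    refine ⟨⟨g0, hg0G⟩, ?_⟩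
    show (g0 : GL (Fin d) ℝ) • Projectivization.mk ℝ v hv = Projectivization.mk ℝ w hw
    rw [gl_smul_mk]
    exact (Projectivization.mk_eq_mk_iff ℝ _ _ _ hw).2 ⟨a, ha⟩
  -- Continuity of the action of `G` on projective space
  haveI : ContinuousSMul ↥G (ℙ ℝ (Euc d)) := by
    constructor
    have hqm := ((IsOpenQuotientMap.id (X := ↥G)).prodMap (isOpenQuotientMap_q (d := d))).isQuotientMap
    rw [hqm.continuous_iff]
    have heq : ((fun p : ↥G × ℙ ℝ (Euc d) => p.1 • p.2) ∘ Prod.map id (q d))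
        = fun p : ↥G × {v : Euc d // v ≠ 0} =>
            q d ⟨Matrix.toEuclideanLin
                ((p.1 : GL (Fin d) ℝ) : Matrix (Fin d) (Fin d) ℝ) ↑p.2,
              toEucLin_gl_ne_zero _ p.2.2⟩ := by
      funext p
      show ((p.1 : GL (Fin d) ℝ)) • q d p.2 = _
      rw [q_eq_mk, gl_smul_mk, q_eq_mk]
    rw [heq]
    refine continuous_q.comp (Continuous.subtype_mk ?_ _)
    have h1 : Continuous fun p : ↥G × {v : Euc d // v ≠ 0} =>
        (Phi d ((p.1 : GL (Fin d) ℝ) : Matrix (Fin d) (Fin d) ℝ), (p.2 : Euc d)) :=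
      ((continuous_phi.comp (Units.continuous_val.comp continuous_subtype_val)).comp
        continuous_fst).prodMk (continuous_subtype_val.comp continuous_snd)
    exact isBoundedBilinearMap_apply.continuous.comp h1
  -- a small neighborhood of the identity in G
  set ε' : ℝ := min (ε₁ / 5) (1 / 2) with hε'def
  have hε'pos : 0 < ε' := lt_min (by linarith) (by norm_num)
  have hε'le : ε' ≤ ε₁ / 5 := min_le_left _ _
  have hε'half : ε' ≤ 1 / 2 := min_le_right _ _
  set U : Set ↥G :=
    {g : ↥G | matOpNorm (((g : GL (Fin d) ℝ) : Matrix (Fin d) (Fin d) ℝ) - 1) < ε'} with hUdef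
  have hUopen : IsOpen U := by
    have h1 : Continuous fun g : ↥G =>
        (((g : GL (Fin d) ℝ) : Matrix (Fin d) (Fin d) ℝ) - 1) :=
      (Units.continuous_val.comp continuous_subtype_val).sub continuous_const
    have hc : Continuous fun g : ↥G =>
        matOpNorm (((g : GL (Fin d) ℝ) : Matrix (Fin d) (Fin d) ℝ) - 1) :=
      (continuous_phi.comp h1).norm
    exact isOpen_lt hc continuous_const
  have hU1 : (1 : ↥G) ∈ U := by
    show matOpNorm _ < ε'
    rw [OneMemClass.coe_one, Units.val_one, sub_self, matOpNorm_eq, map_zero, norm_zero]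
    exact hε'pos
  have hUnhds : U ∈ nhds (1 : ↥G) := hUopen.mem_nhds hU1
  -- the open cover of the sphere
  set c : ℙ ℝ (Euc d) → Set (Metric.sphere (0 : Euc d) 1) :=
    fun x => fS d ⁻¹' interior (U • ({x} : Set (ℙ ℝ (Euc d)))) with hcdef
  have hcopen : ∀ x, IsOpen (c x) := fun x => isOpen_interior.preimage continuous_fS
  have hccov : (Set.univ : Set (Metric.sphere (0 : Euc d) 1)) ⊆ ⋃ x, c x := by
    intro u _
    have hm := smul_singleton_mem_nhds_of_sigmaCompact hUnhds (fS d u)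
    exact Set.mem_iUnion.2 ⟨fS d u, mem_interior_iff_mem_nhds.2 hm⟩
  obtain ⟨δ, hδpos, hδ⟩ := lebesgue_number_lemma_of_metric isCompact_univ hcopen hccov
  refine ⟨δ, hδpos, ?_⟩
  intro v₁ v₂ hv₁ hv₂ hangle
  have hn1 : ‖v₁‖ ≠ 0 := norm_ne_zero_iff.2 hv₁
  have hn2 : ‖v₂‖ ≠ 0 := norm_ne_zero_iff.2 hv₂
  set u₁ : Euc d := ‖v₁‖⁻¹ • v₁ with hu₁def
  set u₂ : Euc d := ‖v₂‖⁻¹ • v₂ with hu₂def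
  have hnu₁ : ‖u₁‖ = 1 := by
    rw [hu₁def, norm_smul, Real.norm_eq_abs, abs_inv, abs_norm, inv_mul_cancel₀ hn1]
  have hnu₂ : ‖u₂‖ = 1 := by
    rw [hu₂def, norm_smul, Real.norm_eq_abs, abs_inv, abs_norm, inv_mul_cancel₀ hn2]
  have hu₁s : u₁ ∈ Metric.sphere (0 : Euc d) 1 := mem_sphere_zero_iff_norm.2 hnu₁
  have hu₂s : u₂ ∈ Metric.sphere (0 : Euc d) 1 := mem_sphere_zero_iff_norm.2 hnu₂
  have hu₁ : u₁ ≠ 0 := by intro h0; rw [h0] at hnu₁; simp at hnu₁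
  have hu₂ : u₂ ≠ 0 := by intro h0; rw [h0] at hnu₂; simp at hnu₂
  have hangle' : angle u₁ u₂ = angle v₁ v₂ := by
    rw [hu₁def, hu₂def, angle_smul_left_of_pos _ _ (inv_pos.2 ((norm_pos_iff).2 hv₁)),
      angle_smul_right_of_pos _ _ (inv_pos.2 ((norm_pos_iff).2 hv₂))]
  -- the distance between the unit vectors is small
  have hcos : (inner ℝ u₁ u₂ : ℝ) = Real.cos (angle u₁ u₂) := by
    rw [cos_angle, hnu₁, hnu₂, mul_one, div_one]
  have hsq : ‖u₁ - u₂‖ ^ 2 = 2 - 2 * Real.cos (angle u₁ u₂) := by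
    rw [norm_sub_sq_real, hnu₁, hnu₂, hcos]; ring
  have hθ0 : 0 ≤ angle u₁ u₂ := angle_nonneg _ _
  have h4 : ‖u₁ - u₂‖ ^ 2 ≤ (angle u₁ u₂) ^ 2 := by
    nlinarith [Real.one_sub_sq_div_two_le_cos (x := angle u₁ u₂)]
  have h5 : ‖u₁ - u₂‖ ≤ angle u₁ u₂ := by
    have hs := Real.sqrt_le_sqrt h4
    rwa [Real.sqrt_sq (norm_nonneg _), Real.sqrt_sq hθ0] at hs
  have hdist : dist (⟨u₁, hu₁s⟩ : Metric.sphere (0 : Euc d) 1) ⟨u₂, hu₂s⟩ < δ := by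
    rw [Subtype.dist_eq, dist_eq_norm]
    calc ‖u₁ - u₂‖ ≤ angle u₁ u₂ := h5
      _ = angle v₁ v₂ := hangle'
      _ < δ := hangle
  obtain ⟨x, hx⟩ := hδ ⟨u₁, hu₁s⟩ (Set.mem_univ _)
  have m1 : fS d ⟨u₁, hu₁s⟩ ∈ interior (U • ({x} : Set (ℙ ℝ (Euc d)))) :=
    hx (Metric.mem_ball_self hδpos)
  have m2 : fS d ⟨u₂, hu₂s⟩ ∈ interior (U • ({x} : Set (ℙ ℝ (Euc d)))) :=
    hx (by rw [Metric.mem_ball, dist_comm]; exact hdist)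
  have m1' := interior_subset m1
  have m2' := interior_subset m2
  rw [Set.smul_singleton] at m1' m2'
  obtain ⟨g, hgU, hgx⟩ := m1'
  obtain ⟨h, hhU, hhx⟩ := m2'
  refine ⟨↑(h * g⁻¹), (h * g⁻¹).2, ?_, ?_⟩
  · -- norm estimate
    set A : Matrix (Fin d) (Fin d) ℝ := ((g : GL (Fin d) ℝ) : Matrix (Fin d) (Fin d) ℝ) with hA
    set B : Matrix (Fin d) (Fin d) ℝ := ((h : GL (Fin d) ℝ) : Matrix (Fin d) (Fin d) ℝ) with hB
    set A' : Matrix (Fin d) (Fin d) ℝ :=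
      (((g⁻¹ : ↥G) : GL (Fin d) ℝ) : Matrix (Fin d) (Fin d) ℝ) with hA'
    have hval : ((↑(h * g⁻¹ : ↥G) : GL (Fin d) ℝ) : Matrix (Fin d) (Fin d) ℝ) = B * A' := rfl
    have hA'A : A' * A = 1 := by
      have hc : ((g⁻¹ : ↥G) : GL (Fin d) ℝ) = ((g : GL (Fin d) ℝ))⁻¹ := rfl
      rw [hA', hA, hc]
      exact Units.inv_mul _
    have hAA' : A * A' = 1 := by
      have hc : ((g⁻¹ : ↥G) : GL (Fin d) ℝ) = ((g : GL (Fin d) ℝ))⁻¹ := rfl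
      rw [hA', hA, hc]
      exact Units.mul_inv _
    have hgU' : matOpNorm (A - 1) < ε' := hgU
    have hhU' : matOpNorm (B - 1) < ε' := hhU
    rw [hval]
    have e1 : A' - 1 = A' * (1 - A) := by rw [mul_sub, mul_one, hA'A]
    have e2 : B * A' - 1 = (B - A) * A' := by rw [sub_mul, hAA']
    have n1 : matOpNorm (A' - 1) ≤ matOpNorm A' * matOpNorm (1 - A) := by
      rw [e1]; exact matOpNorm_mul_le _ _
    have n2 : matOpNorm (1 - A) = matOpNorm (A - 1) := by
      rw [← matOpNorm_neg, neg_sub]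
    have n3 : matOpNorm A' ≤ matOpNorm (A' - 1) + matOpNorm (1 : Matrix (Fin d) (Fin d) ℝ) := by
      have hs := matOpNorm_sub_le A' 0 1
      rwa [sub_zero, sub_zero] at hs
    have none : matOpNorm (1 : Matrix (Fin d) (Fin d) ℝ) ≤ 1 := matOpNorm_one_le
    have hn1A : matOpNorm (1 - A) ≤ 1 / 2 := by rw [n2]; linarith
    have n7 : matOpNorm A' * matOpNorm (1 - A) ≤ matOpNorm A' * (1 / 2) :=
      mul_le_mul_of_nonneg_left hn1A (matOpNorm_nonneg A')
    have hA'2 : matOpNorm A' ≤ 2 := by linarith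
    have n4 : matOpNorm (B - A) ≤ matOpNorm (B - 1) + matOpNorm (1 - A) :=
      matOpNorm_sub_le B A 1
    have n5 : matOpNorm (B * A' - 1) ≤ matOpNorm (B - A) * matOpNorm A' := by
      rw [e2]; exact matOpNorm_mul_le _ _
    have n6 : matOpNorm (B - A) * matOpNorm A' ≤ matOpNorm (B - A) * 2 :=
      mul_le_mul_of_nonneg_left hA'2 (matOpNorm_nonneg _)
    have n8 : matOpNorm (B - A) < 2 * ε' := by linarith
    have n9 : matOpNorm (B - A) * 2 < (2 * ε') * 2 := by linarith
    linarith
  · -- the action on lines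
    have hact : (h * g⁻¹ : ↥G) • fS d ⟨u₁, hu₁s⟩ = fS d ⟨u₂, hu₂s⟩ := by
      rw [← hgx, ← hhx, smul_smul, inv_mul_cancel_right]
    have e₁ : fS d ⟨u₁, hu₁s⟩ = Projectivization.mk ℝ v₁ hv₁ := by
      rw [show fS d ⟨u₁, hu₁s⟩ = Projectivization.mk ℝ u₁ hu₁ from q_eq_mk _]
      refine (Projectivization.mk_eq_mk_iff ℝ _ _ _ hv₁).2
        ⟨Units.mk0 ‖v₁‖⁻¹ (inv_ne_zero hn1), ?_⟩
      rw [Units.smul_def, Units.val_mk0, hu₁def]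
    have e₂ : fS d ⟨u₂, hu₂s⟩ = Projectivization.mk ℝ v₂ hv₂ := by
      rw [show fS d ⟨u₂, hu₂s⟩ = Projectivization.mk ℝ u₂ hu₂ from q_eq_mk _]
      refine (Projectivization.mk_eq_mk_iff ℝ _ _ _ hv₂).2
        ⟨Units.mk0 ‖v₂‖⁻¹ (inv_ne_zero hn2), ?_⟩
      rw [Units.smul_def, Units.val_mk0, hu₂def]
    rw [e₁, e₂] at hact
    have hact2 : (↑(h * g⁻¹ : ↥G) : GL (Fin d) ℝ) • Projectivization.mk ℝ v₁ hv₁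
        = Projectivization.mk ℝ v₂ hv₂ := hact
    rw [gl_smul_mk] at hact2
    obtain ⟨a, ha⟩ := (Projectivization.mk_eq_mk_iff ℝ _ _ _ hv₂).1 hact2
    exact (map_span_eq_iff _ hv₂).2 ⟨a, ha⟩
end

section
/- Let h : ℝ^d → ℝ^d be a C¹ diffeomorphism with h(0) = 0, let 𝒞 ⊂ ℝ^d be a cylinder centered at 0, and let 0 < λ < 1. Then there exists r > 0 such that for every y ∈ ℝ^d and ρ > 0 with ρ𝒞 + y ⊂ B_r(0), one has h(ρ𝒞 + y) ⊇ Dh₀(λρ 𝒞) + h(y), where Dh₀ is the derivative of h at 0, ρ𝒞 = {ρz : z ∈ 𝒞}, and B_r(0) is the open Euclidean ball of radius r about the origin. -/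
/-- A cylinder centered at `0` in `ℝ^d`: the image under an invertible linear map
of a product of balls `B₁ × B₂ ⊆ ℝ^{d-i} × ℝ^i` centered at the origin. -/
def IsCylinder {d : ℕ} (C : Set (EuclideanSpace ℝ (Fin d))) : Prop :=
  ∃ i : ℕ, 1 ≤ i ∧ i ≤ d ∧ ∃ r₁ r₂ : ℝ, 0 < r₁ ∧ 0 < r₂ ∧
    ∃ T : (EuclideanSpace ℝ (Fin (d - i)) × EuclideanSpace ℝ (Fin i)) ≃ₗ[ℝ]
        EuclideanSpace ℝ (Fin d),
      C = T '' (Metric.ball 0 r₁ ×ˢ Metric.ball 0 r₂)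

open Metric Bornology

lemma isCylinder_props {d : ℕ} {C : Set (EuclideanSpace ℝ (Fin d))} (hCyl : IsCylinder C) :
    Convex ℝ C ∧ (∃ δ > 0, Metric.ball 0 δ ⊆ C) ∧ (∃ R > 0, C ⊆ Metric.ball 0 R) := by
  obtain ⟨i, hi1, hid, r₁, r₂, hr₁, hr₂, T, hC⟩ := hCyl
  set e : _ ≃L[ℝ] EuclideanSpace ℝ (Fin d) := T.toContinuousLinearEquiv with he
  have hCe : C = ⇑e '' (Metric.ball 0 r₁ ×ˢ Metric.ball 0 r₂) := by
    rw [hC, T.coe_toContinuousLinearEquiv']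
  have hP : Convex ℝ (Metric.ball (0 : EuclideanSpace ℝ (Fin (d - i))) r₁ ×ˢ
      Metric.ball (0 : EuclideanSpace ℝ (Fin i)) r₂) :=
    (convex_ball (0 : EuclideanSpace ℝ (Fin (d - i))) r₁).prod
      (convex_ball (0 : EuclideanSpace ℝ (Fin i)) r₂)
  refine ⟨?_, ?_, ?_⟩
  · have := hP.linear_image T.toLinearMap
    rw [hC]
    simpa using this
  · have hopen : IsOpen C := by
      rw [hCe]
      exact e.toHomeomorph.isOpenMap _ (isOpen_ball.prod isOpen_ball)
    have h0C : (0 : EuclideanSpace ℝ (Fin d)) ∈ C := by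
      rw [hCe]
      exact ⟨0, ⟨mem_ball_self hr₁, mem_ball_self hr₂⟩, map_zero _⟩
    obtain ⟨δ, hδ, hδC⟩ := Metric.isOpen_iff.mp hopen 0 h0C
    exact ⟨δ, hδ, hδC⟩
  · have hbd : IsBounded C := by
      rw [hCe]
      exact (e.toContinuousLinearMap.lipschitz).isBounded_image
        (isBounded_ball.prod isBounded_ball)
    obtain ⟨R, hR, hCR⟩ := hbd.subset_ball_lt 0 0
    exact ⟨R, hR, hCR⟩

set_option maxHeartbeats 800000 in
theorem stmt15 {d : ℕ}
    (h g : EuclideanSpace ℝ (Fin d) → EuclideanSpace ℝ (Fin d))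
    (hgh : Function.LeftInverse g h) (hhg : Function.RightInverse g h)
    (hc : ContDiff ℝ 1 h) (hc' : ContDiff ℝ 1 g)
    (h0 : h 0 = 0)
    (C : Set (EuclideanSpace ℝ (Fin d))) (hCyl : IsCylinder C)
    (lam : ℝ) (hlam0 : 0 < lam) (hlam1 : lam < 1) :
    ∃ r > 0, ∀ (y : EuclideanSpace ℝ (Fin d)) (ρ : ℝ), 0 < ρ →
      (fun z => ρ • z + y) '' C ⊆ Metric.ball (0 : EuclideanSpace ℝ (Fin d)) r →
      (fun z => fderiv ℝ h 0 ((lam * ρ) • z) + h y) '' C ⊆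
        h '' ((fun z => ρ • z + y) '' C) := by
  obtain ⟨hconv, ⟨δ, hδ, hδC⟩, ⟨R, hR, hCR⟩⟩ := isCylinder_props hCyl
  have hd : 1 ≤ d := hCyl.choose_spec.1.trans hCyl.choose_spec.2.1
  set A := fderiv ℝ h 0 with hA
  set B := fderiv ℝ g 0 with hB
  have hdh : Differentiable ℝ h := hc.differentiable one_ne_zero
  have hdg : Differentiable ℝ g := hc'.differentiable one_ne_zero
  -- B ∘ A = id
  have hBA : ∀ x : EuclideanSpace ℝ (Fin d), B (A x) = x := by
    have h1 : fderiv ℝ (g ∘ h) 0 = (fderiv ℝ g (h 0)).comp (fderiv ℝ h 0) :=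
      fderiv_comp 0 (hdg _) (hdh _)
    have h2 : g ∘ h = id := funext hgh
    rw [h2, fderiv_id, h0] at h1
    intro x
    exact (DFunLike.congr_fun h1 x).symm
  obtain ⟨NA, hANA, hNA0⟩ : ∃ NA : ℝ, ‖A‖ ≤ NA ∧ 0 < NA :=
    ⟨‖A‖ + 1, by linarith [norm_nonneg A], by positivity⟩
  have h1lam : (0:ℝ) < 1 - lam := by linarith
  obtain ⟨ε, hε, hε0⟩ : ∃ ε : ℝ, ε = (1 - lam) * δ / (2 * (lam * R * NA)) ∧ 0 < ε :=
    ⟨_, rfl, by positivity⟩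
  -- continuity of fderiv g at 0
  have hcont : Continuous (fderiv ℝ g) := hc'.continuous_fderiv one_ne_zero
  obtain ⟨δ₂, hδ₂, hδ₂'⟩ := Metric.continuousAt_iff.mp (hcont.continuousAt (x := 0)) ε hε0
  -- continuity of h at 0
  obtain ⟨r₀, hr₀, hr₀'⟩ := Metric.continuousAt_iff.mp (hdh.continuous.continuousAt (x := 0))
    (δ₂ / 2) (by positivity)
  obtain ⟨r, hrpos, hrr₀, hr2⟩ :
      ∃ r : ℝ, 0 < r ∧ r ≤ r₀ ∧ 8 * lam * R * NA * r ≤ δ₂ * δ := by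
    refine ⟨min r₀ (δ₂ * δ / (8 * lam * R * NA)), lt_min hr₀ (by positivity),
      min_le_left _ _, ?_⟩
    have h' := min_le_right r₀ (δ₂ * δ / (8 * lam * R * NA))
    rw [le_div_iff₀ (by positivity)] at h'
    linear_combination h'
  refine ⟨r, hrpos, ?_⟩
  intro y ρ hρ hsub
  have h0C : (0 : EuclideanSpace ℝ (Fin d)) ∈ C := hδC (mem_ball_self hδ)
  have hy : ‖y‖ < r := by
    have h' : ρ • (0 : EuclideanSpace ℝ (Fin d)) + y ∈ Metric.ball (0 : EuclideanSpace ℝ (Fin d)) r :=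
      hsub (Set.mem_image_of_mem _ h0C)
    simpa using h'
  -- bound on ρ : ρ * δ < 4 * r
  have hρδ : ρ * δ < 4 * r := by
    set u : EuclideanSpace ℝ (Fin d) := EuclideanSpace.single (⟨0, hd⟩ : Fin d) (1 : ℝ) with hu
    have hnu : ‖u‖ = 1 := by rw [hu, EuclideanSpace.norm_single]; norm_num
    have hc₀ : (δ / 2) • u ∈ C := by
      apply hδC
      simp only [mem_ball, dist_zero_right, norm_smul, hnu, Real.norm_eq_abs]
      rw [abs_of_pos (by positivity)]
      linarith
    have hmem := hsub ⟨(δ / 2) • u, hc₀, rfl⟩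
    simp only [mem_ball, dist_zero_right] at hmem
    have : ‖ρ • ((δ / 2) • u)‖ ≤ ‖ρ • ((δ / 2) • u) + y‖ + ‖y‖ := by
      have := norm_add_le (ρ • ((δ / 2) • u) + y) (-y)
      simpa using this
    rw [norm_smul, norm_smul, hnu, Real.norm_eq_abs, Real.norm_eq_abs,
      abs_of_pos hρ, abs_of_pos (show (0:ℝ) < δ / 2 by positivity)] at this
    linarith
  -- MVT bound on g in ball 0 δ₂
  have bound : ∀ x ∈ Metric.ball (0 : EuclideanSpace ℝ (Fin d)) δ₂, ‖fderiv ℝ g x - B‖ ≤ ε := by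
    intro x hx
    have := hδ₂' (show dist x 0 < δ₂ by simpa [dist_zero_right] using hx)
    rw [dist_eq_norm] at this
    exact this.le
  intro p hp
  obtain ⟨c, hcC, rfl⟩ := hp
  set w := A ((lam * ρ) • c) with hw
  have hcR : ‖c‖ ≤ R := le_of_lt (by simpa [dist_zero_right] using hCR hcC)
  have hwle : ‖w‖ ≤ NA * (lam * ρ * R) := by
    have h1 : ‖w‖ ≤ ‖A‖ * ‖(lam * ρ) • c‖ := A.le_opNorm _
    rw [norm_smul, Real.norm_eq_abs, abs_of_pos (by positivity)] at h1
    have hAle : ‖A‖ ≤ NA := hANA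
    have h6 : lam * ρ * ‖c‖ ≤ lam * ρ * R := mul_le_mul_of_nonneg_left hcR (by positivity)
    exact h1.trans (mul_le_mul hAle h6 (by positivity) hNA0.le)
  have hwlt : ‖w‖ < δ₂ / 2 := by
    have h2 := mul_lt_mul_of_pos_left hρδ (show 0 < NA * (lam * R) by positivity)
    have h4 : NA * (lam * ρ * R) * δ < δ₂ / 2 * δ := by linarith [h2, hr2]
    have h5 : NA * (lam * ρ * R) < δ₂ / 2 := lt_of_mul_lt_mul_right h4 hδ.le
    linarith [hwle]
  have hhy : ‖h y‖ < δ₂ / 2 := by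
    have := hr₀' (show dist y 0 < r₀ by simp only [dist_zero_right]; linarith)
    rw [h0, dist_zero_right] at this
    exact this
  have hmem1 : h y ∈ Metric.ball (0 : EuclideanSpace ℝ (Fin d)) δ₂ := by
    simp only [mem_ball, dist_zero_right]; linarith
  have hmem2 : h y + w ∈ Metric.ball (0 : EuclideanSpace ℝ (Fin d)) δ₂ := by
    simp only [mem_ball, dist_zero_right]
    calc ‖h y + w‖ ≤ ‖h y‖ + ‖w‖ := norm_add_le _ _
      _ < δ₂ := by linarith
  have hmvt := (convex_ball (0 : EuclideanSpace ℝ (Fin d)) δ₂).norm_image_sub_le_of_norm_fderiv_le'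
    (fun x _ => hdg x) bound hmem1 hmem2
  rw [add_sub_cancel_left, hgh y] at hmvt
  have hBw : B w = (lam * ρ) • c := hBA _
  rw [hBw] at hmvt
  -- define z
  set q := g (h y + w) with hq
  set z := ρ⁻¹ • (q - y) with hz
  have hzc : z - lam • c = ρ⁻¹ • (q - y - (lam * ρ) • c) := by
    rw [hz]
    match_scalars <;> field_simp
  have hnz : ‖z - lam • c‖ < (1 - lam) * δ := by
    rw [hzc, norm_smul, Real.norm_eq_abs, abs_of_pos (by positivity : (0:ℝ) < ρ⁻¹)]
    have h3 : ρ⁻¹ * ‖q - y - (lam * ρ) • c‖ ≤ ρ⁻¹ * (ε * ‖w‖) := by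
      apply mul_le_mul_of_nonneg_left hmvt (by positivity)
    have h4 : ρ⁻¹ * (ε * ‖w‖) ≤ ρ⁻¹ * (ε * (NA * (lam * ρ * R))) := by
      apply mul_le_mul_of_nonneg_left (mul_le_mul_of_nonneg_left hwle hε0.le) (by positivity)
    have h5 : ρ⁻¹ * (ε * (NA * (lam * ρ * R))) = (1 - lam) * δ / 2 := by
      rw [hε]
      field_simp
    have h6 : (1 - lam) * δ / 2 < (1 - lam) * δ := by
      have : 0 < (1 - lam) * δ := by
        have : 0 < 1 - lam := by linarith
        positivity
      linarith
    linarith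
  have hzC : z ∈ C := by
    set e' := (1 - lam)⁻¹ • (z - lam • c) with he'
    have he'C : e' ∈ C := by
      apply hδC
      simp only [mem_ball, dist_zero_right, he', norm_smul, Real.norm_eq_abs,
        abs_of_pos (inv_pos.mpr h1lam)]
      rw [inv_mul_lt_iff₀ h1lam]
      exact hnz
    have : z = lam • c + (1 - lam) • e' := by
      rw [he', smul_inv_smul₀ h1lam.ne']
      abel
    rw [this]
    exact hconv hcC he'C hlam0.le h1lam.le (by ring)
  refine ⟨ρ • z + y, ⟨z, hzC, rfl⟩, ?_⟩
  have hzq : ρ • z + y = q := by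
    rw [hz, smul_inv_smul₀ hρ.ne']
    abel
  rw [hzq, hq, hhg]
  abel
  rfl
end
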